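/- Let H_k be symmetric positive definite with inverse B_k, let s, y ∈ ℝ^d satisfy sᵀy > 0, and let ρ, p > 0. Then the S-BFGS update H_{k+1} = H_k + a s sᵀ - b(H_k y sᵀ + s yᵀ H_k), with b = 1/(sᵀy + ρ/p) and a = (1 + b·yᵀH_k y)/(sᵀy + ρ/(2p)), satisfies det(H_{k+1}) = det(H_k)·[(1 - b·yᵀs)² + (sᵀB_k s)(a - b²·yᵀH_k y)], and consequently det(H_{k+1}) > det(H_k)·[ρ²/(p²(sᵀy + ρ/p)²) + (sᵀB_k s)/(sᵀy + ρ/p)]. -/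

import Mathlib

open Matrix

/-!
Writing `u₁ = a B s - b y` and `u₂ = -b B s`, the update factors as
`H₊ = H (1 + u₁ sᵀ + u₂ (H y)ᵀ)`, so by the Weinstein–Aronszajn identity its determinant is
`det H` times a `2 × 2` determinant, which expands to `(1 - b yᵀs)² + (sᵀB s)(a - b² yᵀH y)`.
For the bound, `1 - b sᵀy = b ρ / p`, and with `A = sᵀy + ρ/p > A' = sᵀy + ρ/(2p)` one has
`a - b² yᵀH y - 1/A = (1/A' - 1/A)(1 + yᵀH y / A) > 0`.
-/

theorem Matrix.det_one_add_vecMulVec_add_vecMulVec {n R : Type*} [Fintype n] [DecidableEq n]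
    [CommRing R] (u₁ v₁ u₂ v₂ : n → R) :
    det (1 + vecMulVec u₁ v₁ + vecMulVec u₂ v₂)
      = (1 + v₁ ⬝ᵥ u₁) * (1 + v₂ ⬝ᵥ u₂) - (v₂ ⬝ᵥ u₁) * (v₁ ⬝ᵥ u₂) := by
  let U : Matrix n (Fin 2) R := (of ![u₁, u₂])ᵀ
  let V : Matrix (Fin 2) n R := of ![v₁, v₂]
  have hUV : U * V = vecMulVec u₁ v₁ + vecMulVec u₂ v₂ := by
    ext i j
    simp [U, V, mul_apply, Fin.sum_univ_two, vecMulVec_apply]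
  have hVU (i j : Fin 2) : (V * U) i j = ![v₁, v₂] i ⬝ᵥ ![u₁, u₂] j := rfl
  rw [add_assoc, ← hUV, det_one_add_mul_comm, det_fin_two]
  simp only [add_apply, one_apply_eq, one_apply_ne zero_ne_one, one_apply_ne one_ne_zero, hVU,
    cons_val_zero, cons_val_one]
  ring

section SBFGS

variable {n R : Type*} [Fintype n] [DecidableEq n] [CommRing R]

def sbfgsUpdate (H : Matrix n n R) (s y : n → R) (a b : R) : Matrix n n R :=
  H + a • vecMulVec s s - b • (vecMulVec (H *ᵥ y) s + vecMulVec s (H *ᵥ y))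

theorem sbfgsUpdate_eq_mul {H B : Matrix n n R} (hHB : H * B = 1) (s y : n → R) (a b : R) :
    sbfgsUpdate H s y a b
      = H * (1 + vecMulVec (a • (B *ᵥ s) - b • y) s + vecMulVec (-b • (B *ᵥ s)) (H *ᵥ y)) := by
  have hHBs : H *ᵥ (B *ᵥ s) = s := by rw [mulVec_mulVec, hHB, one_mulVec]
  rw [sbfgsUpdate, Matrix.mul_add, Matrix.mul_add, Matrix.mul_one, mul_vecMulVec, mul_vecMulVec,
    mulVec_sub, mulVec_smul, mulVec_smul, mulVec_smul, hHBs, sub_vecMulVec, smul_vecMulVec,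
    smul_vecMulVec, smul_vecMulVec, smul_add, neg_smul]
  abel

theorem det_sbfgsUpdate {H B : Matrix n n R} (hH : H.IsSymm) (hHB : H * B = 1)
    (s y : n → R) (a b : R) :
    det (sbfgsUpdate H s y a b)
      = det H * ((1 - b * (y ⬝ᵥ s)) ^ 2
        + (s ⬝ᵥ (B *ᵥ s)) * (a - b ^ 2 * (y ⬝ᵥ (H *ᵥ y)))) := by
  have hHBs : H *ᵥ (B *ᵥ s) = s := by rw [mulVec_mulVec, hHB, one_mulVec]
  have hHyBs : (H *ᵥ y) ⬝ᵥ (B *ᵥ s) = y ⬝ᵥ s := by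
    rw [← vecMul_transpose, hH.eq, ← dotProduct_mulVec, hHBs]
  rw [sbfgsUpdate_eq_mul hHB, det_mul, det_one_add_vecMulVec_add_vecMulVec]
  simp only [dotProduct_sub, dotProduct_smul, smul_eq_mul, hHyBs, dotProduct_comm (H *ᵥ y) y,
    dotProduct_comm s y]
  ring

end SBFGS

theorem one_div_lt_sbfgs_coeff {A A' c : ℝ} (hA' : 0 < A') (hAA' : A' < A) (hc : 0 ≤ c) :
    1 / A < (1 + 1 / A * c) / A' - (1 / A) ^ 2 * c := by
  have hA : 0 < A := hA'.trans hAA'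
  have key : (1 + 1 / A * c) / A' - (1 / A) ^ 2 * c - 1 / A = (1 / A' - 1 / A) * (1 + c / A) := by
    field_simp
    ring
  have : 0 < (1 / A' - 1 / A) * (1 + c / A) :=
    mul_pos (sub_pos.2 (one_div_lt_one_div_of_lt hA' hAA')) (by positivity)
  linarith

theorem sbfgs_det_bound_general {d : ℕ} (s y : Fin d → ℝ) (hsy : 0 < s ⬝ᵥ y)
    (Hk Bk : Matrix (Fin d) (Fin d) ℝ) (hHk : Hk.PosDef)
    (hBk : Hk * Bk = 1)
    (p ρ : ℝ) (hp : 0 < p) (hρ : 0 < ρ)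
    (b a : ℝ) (hb : b = 1 / (s ⬝ᵥ y + ρ / p))
    (ha : a = (1 + b * (y ⬝ᵥ (Hk *ᵥ y))) / (s ⬝ᵥ y + ρ / (2 * p)))
    (H1 : Matrix (Fin d) (Fin d) ℝ)
    (hH1 : H1 = Hk + a • vecMulVec s s
        - b • (vecMulVec (Hk *ᵥ y) s + vecMulVec s (Hk *ᵥ y))) :
    det H1 = det Hk * ((1 - b * (y ⬝ᵥ s)) ^ 2
        + (s ⬝ᵥ (Bk *ᵥ s)) * (a - b ^ 2 * (y ⬝ᵥ (Hk *ᵥ y))))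
    ∧ det Hk * (ρ ^ 2 / (p ^ 2 * (s ⬝ᵥ y + ρ / p) ^ 2)
        + (s ⬝ᵥ (Bk *ᵥ s)) / (s ⬝ᵥ y + ρ / p)) < det H1 := by
  have hdet := det_sbfgsUpdate (isHermitian_iff_isSymm.1 hHk.isHermitian) hBk s y a b
  rw [sbfgsUpdate, ← hH1] at hdet
  refine ⟨hdet, ?_⟩
  have hA' : 0 < s ⬝ᵥ y + ρ / (2 * p) := by positivity
  have hAA' : s ⬝ᵥ y + ρ / (2 * p) < s ⬝ᵥ y + ρ / p := by
    have : ρ / (2 * p) < ρ / p := div_lt_div_of_pos_left hρ hp (by linarith)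
    linarith
  have hs : s ≠ 0 := by rintro rfl; simp at hsy
  have hBs : 0 < s ⬝ᵥ (Bk *ᵥ s) := by
    simpa using (inv_eq_right_inv hBk ▸ hHk.inv).dotProduct_mulVec_pos hs
  have hHy : 0 ≤ y ⬝ᵥ (Hk *ᵥ y) := by simpa using hHk.posSemidef.dotProduct_mulVec_nonneg y
  have hfirst : (1 - b * (y ⬝ᵥ s)) ^ 2 = ρ ^ 2 / (p ^ 2 * (s ⬝ᵥ y + ρ / p) ^ 2) := by
    have hA : s ⬝ᵥ y + ρ / p ≠ 0 := by positivity
    rw [hb, dotProduct_comm y s]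
    field_simp
    ring
  have hsecond : (s ⬝ᵥ (Bk *ᵥ s)) / (s ⬝ᵥ y + ρ / p)
      < (s ⬝ᵥ (Bk *ᵥ s)) * (a - b ^ 2 * (y ⬝ᵥ (Hk *ᵥ y))) := by
    rw [div_eq_mul_one_div, ha, hb]
    exact mul_lt_mul_of_pos_left (one_div_lt_sbfgs_coeff hA' hAA' hHy) hBs
  rw [hdet, hfirst]
  gcongr
  exact hHk.det_pos

/-- Determinant identity and lower bound for the S-BFGS update (Lemma 2.3). -/
theorem sbfgs_det_bound {d : ℕ} (s y : Fin d → ℝ) (hsy : 0 < s ⬝ᵥ y)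
    (Hk Bk : Matrix (Fin d) (Fin d) ℝ) (hHk : Hk.PosDef)
    (hBk : Hk * Bk = 1) (hBk' : Bk * Hk = 1)
    (p ρ : ℝ) (hp : 0 < p) (hρ : 0 < ρ)
    (b a : ℝ) (hb : b = 1 / (s ⬝ᵥ y + ρ / p))
    (ha : a = (1 + b * (y ⬝ᵥ (Hk *ᵥ y))) / (s ⬝ᵥ y + ρ / (2 * p)))
    (H1 : Matrix (Fin d) (Fin d) ℝ)
    (hH1 : H1 = Hk + a • vecMulVec s s
        - b • (vecMulVec (Hk *ᵥ y) s + vecMulVec s (Hk *ᵥ y))) :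
    det H1 = det Hk * ((1 - b * (y ⬝ᵥ s)) ^ 2
        + (s ⬝ᵥ (Bk *ᵥ s)) * (a - b ^ 2 * (y ⬝ᵥ (Hk *ᵥ y))))
    ∧ det Hk * (ρ ^ 2 / (p ^ 2 * (s ⬝ᵥ y + ρ / p) ^ 2)
        + (s ⬝ᵥ (Bk *ᵥ s)) / (s ⬝ᵥ y + ρ / p)) < det H1 :=
  sbfgs_det_bound_general s y hsy Hk Bk hHk hBk p ρ hp hρ b a hb ha H1 hH1
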